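/- arXiv:1210.5426 — 4 statements merged into one kernel-verified Lean document; each statement's English description precedes it below -/
import Mathlib

section
/- Let X be a compact Hausdorff space and let f₁, f₂ : X → ℝ be continuous. Define λ₁(x) = min(f₁(x), f₂(x)) and λ₂(x) = max(f₁(x), f₂(x)). For any ε > 0, there exists a unitary u ∈ M₂(C(X)) such that ‖u · diag(f₁, f₂) · u* − diag(λ₁, λ₂)‖ < ε. -/
/-!
Conjugation by the rotation through `θ` turns `diag(a, b)` into `diag(b, a)` at `θ = π / 2`.
Choose `θ(x)` continuously, equal to `0` where `f₁ ≤ f₂` and to `π / 2` where `f₁ - f₂ ≥ ε`;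
there the conjugate is exactly the sorted diagonal. Elsewhere both `diag(f₁, f₂)` and the sorted
diagonal lie within `|f₁ - f₂| / 2` of the same scalar `(f₁ + f₂) / 2`, which unitary conjugation
fixes, so the error is at most `|f₁ - f₂| < ε`.
-/

open scoped Matrix.Norms.L2Operator

open Real

noncomputable def rotationMatrix (θ : ℝ) : Matrix (Fin 2) (Fin 2) ℂ :=
  !![(cos θ : ℂ), -(sin θ : ℂ); (sin θ : ℂ), (cos θ : ℂ)]

noncomputable def pauliZ : Matrix (Fin 2) (Fin 2) ℂ := !![1, 0; 0, -1]

theorem rotationMatrix_zero : rotationMatrix 0 = 1 := by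
  simp [rotationMatrix, Matrix.one_fin_two]

theorem rotationMatrix_add (θ φ : ℝ) :
    rotationMatrix (θ + φ) = rotationMatrix θ * rotationMatrix φ := by
  simp only [rotationMatrix, Matrix.mul_fin_two, cos_add, sin_add]
  push_cast
  congr 1; ring_nf

theorem star_rotationMatrix (θ : ℝ) : star (rotationMatrix θ) = rotationMatrix (-θ) := by
  ext i j
  fin_cases i <;> fin_cases j <;>
    simp [rotationMatrix, Matrix.star_apply, ← Complex.cos_conj, ← Complex.sin_conj]

theorem rotationMatrix_mem_unitary (θ : ℝ) :
    rotationMatrix θ ∈ unitary (Matrix (Fin 2) (Fin 2) ℂ) := by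
  rw [Unitary.mem_iff, star_rotationMatrix, ← rotationMatrix_add, ← rotationMatrix_add,
    neg_add_cancel, add_neg_cancel, rotationMatrix_zero]
  exact ⟨rfl, rfl⟩

theorem continuous_rotationMatrix : Continuous rotationMatrix := by
  refine continuous_matrix fun i j => ?_
  fin_cases i <;> fin_cases j <;> simp [rotationMatrix] <;> fun_prop

theorem rotationMatrix_pi_div_two_conj (a b : ℂ) :
    rotationMatrix (π / 2) * !![a, 0; 0, b] * star (rotationMatrix (π / 2)) = !![b, 0; 0, a] := by
  rw [star_rotationMatrix]
  simp [rotationMatrix]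

theorem pauliZ_mem_unitary : pauliZ ∈ unitary (Matrix (Fin 2) (Fin 2) ℂ) := by
  have h : star pauliZ = pauliZ := by
    ext i j
    fin_cases i <;> fin_cases j <;> simp [pauliZ, Matrix.star_apply]
  rw [Unitary.mem_iff, h, and_self, pauliZ, Matrix.mul_fin_two, Matrix.one_fin_two]
  norm_num

theorem diag_eq_smul_one_add_smul_pauliZ (a b : ℂ) :
    !![a, 0; 0, b] =
      ((a + b) / 2) • (1 : Matrix (Fin 2) (Fin 2) ℂ) + ((a - b) / 2) • pauliZ := by
  ext i j
  fin_cases i <;> fin_cases j <;> simp [pauliZ] <;> ring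

theorem norm_conj_diag_sub_diag_le {u : Matrix (Fin 2) (Fin 2) ℂ}
    (hu : u ∈ unitary (Matrix (Fin 2) (Fin 2) ℂ)) {a b c d : ℂ} (h : a + b = c + d) :
    ‖u * !![a, 0; 0, b] * star u - !![c, 0; 0, d]‖ ≤ ‖a - b‖ / 2 + ‖c - d‖ / 2 := by
  have hu' : u * star u = 1 := Unitary.mul_star_self_of_mem hu
  have hsplit : u * !![a, 0; 0, b] * star u - !![c, 0; 0, d] =
      ((a - b) / 2) • (u * pauliZ * star u) - ((c - d) / 2) • pauliZ := by
    rw [diag_eq_smul_one_add_smul_pauliZ a b, diag_eq_smul_one_add_smul_pauliZ c d, h]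
    simp only [mul_add, add_mul, Matrix.mul_smul, Matrix.smul_mul, mul_one, hu']
    abel
  have hconj : ‖u * pauliZ * star u‖ = 1 := by
    rw [CStarRing.norm_mul_mem_unitary _ (Unitary.star_mem hu),
      CStarRing.norm_mem_unitary_mul _ hu, CStarRing.norm_of_mem_unitary pauliZ_mem_unitary]
  calc _ ≤ ‖((a - b) / 2) • (u * pauliZ * star u)‖ + ‖((c - d) / 2) • pauliZ‖ := by
        rw [hsplit]; exact norm_sub_le _ _
    _ = ‖a - b‖ / 2 + ‖c - d‖ / 2 := by
        rw [norm_smul, norm_smul, hconj, CStarRing.norm_of_mem_unitary pauliZ_mem_unitary]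
        simp

noncomputable def sortingAngle (ε a b : ℝ) : ℝ := π / 2 * max 0 (min 1 ((a - b) / ε))

theorem sortingAngle_of_le {ε a b : ℝ} (hε : 0 ≤ ε) (h : a ≤ b) : sortingAngle ε a b = 0 := by
  have : (a - b) / ε ≤ 0 := div_nonpos_of_nonpos_of_nonneg (by linarith) hε
  simp [sortingAngle, max_eq_left (min_le_of_right_le this)]

theorem sortingAngle_of_le_sub {ε a b : ℝ} (hε : 0 < ε) (h : ε ≤ a - b) :
    sortingAngle ε a b = π / 2 := by
  have : 1 ≤ (a - b) / ε := by rwa [le_div_iff₀ hε, one_mul]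
  simp [sortingAngle, min_eq_left this]

theorem norm_rotationMatrix_sortingAngle_conj_sub_lt {ε : ℝ} (hε : 0 < ε) (a b : ℝ) :
    ‖rotationMatrix (sortingAngle ε a b) * !![(a : ℂ), 0; 0, (b : ℂ)] *
        star (rotationMatrix (sortingAngle ε a b)) -
      !![((min a b : ℝ) : ℂ), 0; 0, ((max a b : ℝ) : ℂ)]‖ < ε := by
  rcases le_or_gt a b with hab | hba
  · simp [sortingAngle_of_le hε.le hab, rotationMatrix_zero, hab, hε]
  rcases le_or_gt ε (a - b) with hsep | hclose
  · simp [sortingAngle_of_le_sub hε hsep, rotationMatrix_pi_div_two_conj, hba.le, hε]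
  calc _ ≤ ‖(a : ℂ) - b‖ / 2 + ‖((min a b : ℝ) : ℂ) - ((max a b : ℝ) : ℂ)‖ / 2 :=
        norm_conj_diag_sub_diag_le (rotationMatrix_mem_unitary _) <| by
          rw [← Complex.ofReal_add, ← Complex.ofReal_add, min_add_max]
    _ = |a - b| := by
        rw [← Complex.ofReal_sub, ← Complex.ofReal_sub, Complex.norm_real, Complex.norm_real,
          norm_sub_rev (min a b), Real.norm_eq_abs, Real.norm_eq_abs, max_sub_min_eq_abs', abs_abs]
        ring
    _ < ε := by rwa [abs_of_pos (sub_pos.mpr hba)]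

theorem linear_span_stmt3_general {X : Type*} [TopologicalSpace X] [CompactSpace X]
    (f₁ f₂ : C(X, ℝ)) (ε : ℝ) (hε : 0 < ε) :
    ∃ u w : C(X, Matrix (Fin 2) (Fin 2) ℂ),
      (∀ x, star (u x) * u x = 1 ∧ u x * star (u x) = 1) ∧
      (∀ x, w x = u x * !![(f₁ x : ℂ), 0; 0, (f₂ x : ℂ)] * star (u x)
        - !![((min (f₁ x) (f₂ x) : ℝ) : ℂ), 0; 0, ((max (f₁ x) (f₂ x) : ℝ) : ℂ)]) ∧
      ‖w‖ < ε := by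
  let u : C(X, Matrix (Fin 2) (Fin 2) ℂ) :=
    ⟨fun x => rotationMatrix (sortingAngle ε (f₁ x) (f₂ x)),
      continuous_rotationMatrix.comp (by unfold sortingAngle; fun_prop)⟩
  let w : C(X, Matrix (Fin 2) (Fin 2) ℂ) :=
    ⟨fun x => u x * !![(f₁ x : ℂ), 0; 0, (f₂ x : ℂ)] * star (u x)
        - !![((min (f₁ x) (f₂ x) : ℝ) : ℂ), 0; 0, ((max (f₁ x) (f₂ x) : ℝ) : ℂ)], by fun_prop⟩
  refine ⟨u, w, fun x => rotationMatrix_mem_unitary _, fun x => rfl, ?_⟩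
  rw [ContinuousMap.norm_lt_iff _ hε]
  exact fun x => norm_rotationMatrix_sortingAngle_conj_sub_lt hε _ _

/-- For continuous `f₁ f₂ : X → ℝ` on a compact Hausdorff space `X` and
`λ₁ = min(f₁,f₂)`, `λ₂ = max(f₁,f₂)`, for every `ε > 0` there is a unitary
`u ∈ M₂(C(X))` with `‖u · diag(f₁,f₂) · u* − diag(λ₁,λ₂)‖ < ε`. -/
theorem linear_span_stmt3 {X : Type*} [TopologicalSpace X] [CompactSpace X] [T2Space X]
    (f₁ f₂ : C(X, ℝ)) (ε : ℝ) (hε : 0 < ε) :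
    ∃ u w : C(X, Matrix (Fin 2) (Fin 2) ℂ),
      (∀ x, star (u x) * u x = 1 ∧ u x * star (u x) = 1) ∧
      (∀ x, w x = u x * !![(f₁ x : ℂ), 0; 0, (f₂ x : ℂ)] * star (u x)
        - !![((min (f₁ x) (f₂ x) : ℝ) : ℂ), 0; 0, ((max (f₁ x) (f₂ x) : ℝ) : ℂ)]) ∧
      ‖w‖ < ε :=
  linear_span_stmt3_general f₁ f₂ ε hε
end

section
/- Let A be a unital C*-algebra and E : A → P a conditional expectation onto a unital C*-subalgebra P admitting a quasi-basis {(uᵢ, vᵢ)}ᵢ₌₁ⁿ, i.e., a = Σᵢ uᵢ E(vᵢ a) = Σᵢ E(a uᵢ) vᵢ for all a ∈ A. Then the element Index E = Σᵢ uᵢvᵢ lies in the center of A. -/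
/-- If `E : A → P ⊆ A` is a conditional expectation onto a unital
C*-subalgebra admitting a quasi-basis `{(uᵢ, vᵢ)}`, then `Index E = Σᵢ uᵢ vᵢ` is
central in `A`. -/
theorem linear_span_stmt6 {A : Type*} [CStarAlgebra A]
    (P : StarSubalgebra ℂ A) (E : A →ₗ[ℂ] A)
    (hrange : ∀ a, E a ∈ P)
    (hproj : ∀ p ∈ P, E p = p)
    (hbimod : ∀ p ∈ P, ∀ a : A, E (p * a) = p * E a ∧ E (a * p) = E a * p)
    (n : ℕ) (u v : Fin n → A)
    (hqb : ∀ a : A, a = ∑ i, u i * E (v i * a) ∧ a = ∑ i, E (a * u i) * v i) :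
    ∀ a : A, (∑ i, u i * v i) * a = a * (∑ i, u i * v i) := by
  intro a
  calc (∑ i, u i * v i) * a = ∑ i, u i * (v i * a) := by
        rw [Finset.sum_mul]; simp [mul_assoc]
    _ = ∑ i, u i * (∑ j, E (v i * a * u j) * v j) := by
        refine Finset.sum_congr rfl fun i _ => ?_
        rw [← (hqb (v i * a)).2]
    _ = ∑ j, (∑ i, u i * E (v i * (a * u j))) * v j := by
        simp_rw [Finset.mul_sum, Finset.sum_mul]
        rw [Finset.sum_comm]
        simp [mul_assoc]
    _ = ∑ j, (a * u j) * v j := by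
        refine Finset.sum_congr rfl fun j _ => ?_
        rw [← (hqb (a * u j)).1]
    _ = a * (∑ i, u i * v i) := by
        rw [Finset.mul_sum]; simp [mul_assoc]
end

section
/- Let A be a unital C*-algebra in which every self-adjoint element is a norm limit of real linear combinations of projections (the LP property). Then for every n ≥ 1, the matrix algebra Mₙ(A) also has the LP property. -/
/-- A topological star algebra has the LP property if the linear span of its
projections (self-adjoint idempotents) is dense. -/
def LPProperty (A : Type*) [NonUnitalRing A] [Star A] [Module ℂ A]
    [TopologicalSpace A] : Prop :=
  Dense (↑(Submodule.span ℂ {p : A | IsSelfAdjoint p ∧ IsIdempotentElem p}) : Set A)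

/-!
Under `Mₙ(A) ≅ Mₙ(ℂ) ⊗ A`, an elementary tensor `Q ⊗ p` of projections is a projection.
The projections of `Mₙ(ℂ)` span `Mₙ(ℂ)`: a Hermitian matrix is a real combination of the
unitary conjugates of the diagonal matrix units, and `X = ℜ X + i ℑ X`. Hence the span of the
projections of `Mₙ(A)` contains `Mₙ(ℂ) ⊗ span(projections of A)`, which is dense.
-/

open Matrix ComplexStarModule

theorem Submodule.eq_top_of_isSelfAdjoint_mem {M : Type*} [AddCommGroup M] [StarAddMonoid M]
    [Module ℂ M] [StarModule ℂ M] {S : Submodule ℂ M}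
    (h : ∀ x : M, IsSelfAdjoint x → x ∈ S) : S = ⊤ := by
  refine eq_top_iff'.2 fun x => ?_
  rw [← realPart_add_I_smul_imaginaryPart x]
  exact S.add_mem (h _ (ℜ x).2) (S.smul_mem _ (h _ (ℑ x).2))

namespace Matrix

section Complex

variable {ι : Type*} [Fintype ι] [DecidableEq ι]

theorem IsHermitian.mem_span_isStarProjection {H : Matrix ι ι ℂ} (hH : H.IsHermitian) :
    H ∈ Submodule.span ℂ {P : Matrix ι ι ℂ | IsStarProjection P} := by
  rw [hH.spectral_theorem, ← sum_single_eq_diagonal, map_sum]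
  refine Submodule.sum_mem _ fun k _ => ?_
  rw [← mul_one ((RCLike.ofReal ∘ hH.eigenvalues) k), ← smul_eq_mul, ← smul_single, map_smul]
  refine Submodule.smul_mem _ _ (Submodule.subset_span (IsStarProjection.map ?_ _))
  rw [isStarProjection_iff']
  simp [single_mul_single_same, star_eq_conjTranspose, conjTranspose_single]

theorem span_isStarProjection_eq_top :
    Submodule.span ℂ {P : Matrix ι ι ℂ | IsStarProjection P} = ⊤ :=
  Submodule.eq_top_of_isSelfAdjoint_mem fun _ hH => IsHermitian.mem_span_isStarProjection hH

end Complex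

variable {R A ι : Type*} [CommSemiring R] [NonUnitalSemiring A] [Module R A] [Fintype ι]

variable (R A ι) in
def mapSMulBilin : Matrix ι ι R →ₗ[R] A →ₗ[R] Matrix ι ι A :=
  LinearMap.mk₂ R (fun Q a => Q.map (· • a))
    (fun _ _ _ => by ext; simp only [map_apply, add_apply, add_smul])
    (fun _ _ _ => by ext; simp only [map_apply, smul_apply, smul_eq_mul, mul_smul])
    (fun _ _ _ => by ext; simp only [map_apply, add_apply, smul_add])
    (fun _ _ _ => by ext; exact smul_comm _ _ _)

end Matrix

theorem IsStarProjection.matrix_map_smul {R A ι : Type*} [CommSemiring R] [StarRing R]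
    [NonUnitalSemiring A] [StarRing A] [Module R A] [StarModule R A] [IsScalarTower R A A]
    [SMulCommClass R A A] [Fintype ι] {Q : Matrix ι ι R} {p : A}
    (hQ : IsStarProjection Q) (hp : IsStarProjection p) : IsStarProjection (Q.map (· • p)) := by
  rw [isStarProjection_iff'] at hQ hp ⊢
  constructor
  · conv_rhs => rw [← hQ.1, ← hp.1]
    ext k l
    simp only [mul_apply, map_apply, smul_mul_smul_comm, Finset.sum_smul]
  · conv_rhs => rw [← hQ.2, ← hp.2]
    ext k l
    simp only [star_apply, map_apply, star_smul]

section LP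

variable {A ι : Type*} [NonUnitalRing A] [StarRing A] [Module ℂ A] [StarModule ℂ A]
  [IsScalarTower ℂ A A] [SMulCommClass ℂ A A] [Fintype ι] [DecidableEq ι]

theorem Matrix.map_smul_mem_span_projections {a : A}
    (ha : a ∈ Submodule.span ℂ {p : A | IsSelfAdjoint p ∧ IsIdempotentElem p})
    (Q : Matrix ι ι ℂ) :
    Q.map (· • a) ∈ Submodule.span ℂ {P : Matrix ι ι A | IsSelfAdjoint P ∧ IsIdempotentElem P} := by
  have hQ : Q ∈ Submodule.span ℂ {P : Matrix ι ι ℂ | IsStarProjection P} := by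
    simp [span_isStarProjection_eq_top]
  have hQa := Submodule.apply_mem_map₂ (mapSMulBilin ℂ A ι) hQ ha
  rw [Submodule.map₂_span_span] at hQa
  refine Submodule.span_mono ?_ hQa
  rintro _ ⟨P, hP, p, ⟨hp_sa, hp_idem⟩, rfl⟩
  have hPp := hP.matrix_map_smul ⟨hp_idem, hp_sa⟩
  exact ⟨hPp.isSelfAdjoint, hPp.isIdempotentElem⟩

theorem LPProperty.matrix [TopologicalSpace A] [ContinuousAdd A] [ContinuousConstSMul ℂ A]
    (hA : LPProperty A) : LPProperty (Matrix ι ι A) := by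
  have hmem (Q : Matrix ι ι ℂ) (a : A) : Q.map (· • a) ∈
      closure (Submodule.span ℂ {P : Matrix ι ι A | IsSelfAdjoint P ∧ IsIdempotentElem P}) :=
    map_mem_closure (f := fun b => Q.map (· • b))
      (continuous_matrix fun k l => continuous_const_smul (Q k l)) (hA a)
      fun _ hb => Matrix.map_smul_mem_span_projections hb Q
  intro X
  rw [← Submodule.topologicalClosure_coe, matrix_eq_sum_single X]
  refine Submodule.sum_mem _ fun i _ => Submodule.sum_mem _ fun j _ => ?_
  have hsingle : (single i j (1 : ℂ)).map (· • X i j) = single i j (X i j) := by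
    ext k l
    by_cases h : i = k ∧ j = l <;> simp [h]
  exact hsingle ▸ hmem _ _

end LP

theorem linear_span_stmt12_general {A : Type*} [CStarAlgebra A] (n : ℕ)
    (hA : LPProperty A) : LPProperty (Matrix (Fin n) (Fin n) A) :=
  hA.matrix

/-- If a unital C*-algebra `A` has the LP property, then so does
`Mₙ(A)` for every `n ≥ 1`. -/
theorem linear_span_stmt12 {A : Type*} [CStarAlgebra A] (n : ℕ) (hn : 1 ≤ n)
    (hA : LPProperty A) : LPProperty (Matrix (Fin n) (Fin n) A) :=
  linear_span_stmt12_general n hA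
end

section
/- Let P ⊂ A be a unital inclusion of C*-algebras and suppose there exists a unital injective *-homomorphism β from A into the sequence algebra P^∞ = ℓ^∞(ℕ, P)/c₀(P) such that β(x) = x (the constant sequence class) for all x ∈ P. If A has the LP property, then P has the LP property. -/
/-!
We work in `P^∞ = ℓ^∞(ℕ, P) / c₀(P)` through representative sequences. A unital *-homomorphism
into it is contractive: writing `‖y‖² - y⋆y = c⋆c` gives `β(y)⋆β(y) ≤ ‖y‖² + o(1)`. A projection
of `A` goes to a sequence that is eventually an almost self-adjoint idempotent; its spectrum then
misses `1/2`, and functional calculus with the step function at `1/2` moves each term to a nearby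
projection of `P`. So `β` maps the span of projections of `A` to sequences that are eventually
close to the span of projections of `P`. Approximating `q ∈ P` inside `A` and using `β(q) = q`
then puts `q` in the closure of that span.
-/

open Filter Topology

theorem lpProperty_iff_dense_span_isStarProjection {A : Type*} [NonUnitalRing A] [Star A]
    [Module ℂ A] [TopologicalSpace A] :
    LPProperty A ↔ Dense (Submodule.span ℂ {p : A | IsStarProjection p} : Set A) := by
  simp only [LPProperty, isStarProjection_iff, and_comm]

section Sequences

variable {𝕜 E : Type*}

/-- Equality of the classes of `u` and `v` in `ℓ^∞(ℕ, E) / c₀(E)`. -/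
def AsympEq [SeminormedAddCommGroup E] (u v : ℕ → E) : Prop :=
  Tendsto (fun n => u n - v n) atTop (𝓝 0)

/-- The class of `u` in `ℓ^∞(ℕ, E) / c₀(E)` lies in the closure of the classes of `S`-valued
sequences. -/
def ApproxIn [SeminormedAddCommGroup E] (S : Set E) (u : ℕ → E) : Prop :=
  ∀ ε > 0, ∀ᶠ n in atTop, ∃ z ∈ S, ‖z - u n‖ < ε

namespace AsympEq

section Group

variable [SeminormedAddCommGroup E] {u v w u' v' : ℕ → E}

theorem _root_.asympEq_iff_tendsto_norm :
    AsympEq u v ↔ Tendsto (fun n => ‖u n - v n‖) atTop (𝓝 0) :=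
  tendsto_zero_iff_norm_tendsto_zero

theorem refl (u : ℕ → E) : AsympEq u u := by
  simpa [AsympEq] using tendsto_const_nhds

theorem symm (h : AsympEq u v) : AsympEq v u := by
  simpa [AsympEq] using Tendsto.neg h

theorem trans (h₁ : AsympEq u v) (h₂ : AsympEq v w) : AsympEq u w := by
  simpa [AsympEq] using Tendsto.add h₁ h₂

theorem add (h : AsympEq u v) (h' : AsympEq u' v') : AsympEq (u + u') (v + v') := by
  simpa [AsympEq, add_sub_add_comm] using Tendsto.add h h'

theorem const_smul [NormedField 𝕜] [NormedSpace 𝕜 E] (h : AsympEq u v) (c : 𝕜) :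
    AsympEq (c • u) (c • v) := by
  simpa [AsympEq, ← smul_sub] using Tendsto.const_smul h c

theorem eventually_norm_sub_lt (h : AsympEq u v) {ε : ℝ} (hε : 0 < ε) :
    ∀ᶠ n in atTop, ‖u n - v n‖ < ε :=
  (asympEq_iff_tendsto_norm.1 h).eventually (gt_mem_nhds hε)

end Group

theorem mul [SeminormedRing E] {u v u' v' : ℕ → E} (hu : AsympEq u u') (hv : AsympEq v v')
    (hu_bdd : ∃ C, ∀ n, ‖u n‖ ≤ C) (hv'_bdd : ∃ C, ∀ n, ‖v' n‖ ≤ C) :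
    AsympEq (u * v) (u' * v') := by
  have h := (isBoundedUnder_le_mul_tendsto_zero (isBoundedUnder_of hu_bdd) hv).add
    (hu.zero_mul_isBoundedUnder_le (isBoundedUnder_of hv'_bdd))
  simp only [add_zero] at h
  refine h.congr fun n => ?_
  simp only [Pi.mul_apply]
  noncomm_ring

end AsympEq

namespace ApproxIn

variable [SeminormedAddCommGroup E] {S : Set E} {u v : ℕ → E}

theorem of_forall_eventually_lt
    (h : ∀ ε > 0, ∃ v, ApproxIn S v ∧ ∀ᶠ n in atTop, ‖v n - u n‖ < ε) : ApproxIn S u := by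
  intro ε hε
  obtain ⟨v, hv, hvu⟩ := h (ε / 2) (half_pos hε)
  filter_upwards [hv (ε / 2) (half_pos hε), hvu] with n ⟨z, hzS, hz⟩ hn
  refine ⟨z, hzS, ?_⟩
  calc ‖z - u n‖ ≤ ‖z - v n‖ + ‖v n - u n‖ := norm_sub_le_norm_sub_add_norm_sub _ _ _
    _ < ε := by linarith

theorem congr (h : ApproxIn S u) (huv : AsympEq u v) : ApproxIn S v :=
  of_forall_eventually_lt fun _ hε => ⟨u, h, huv.eventually_norm_sub_lt hε⟩

theorem mono {T : Set E} (h : ApproxIn S u) (hST : S ⊆ T) : ApproxIn T u :=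
  fun ε hε => (h ε hε).mono fun _ ⟨z, hz, hzu⟩ => ⟨z, hST hz, hzu⟩

theorem mem_closure_of_const {q : E} (h : ApproxIn S fun _ => q) : q ∈ closure S :=
  Metric.mem_closure_iff.2 fun ε hε =>
    let ⟨_, z, hzS, hz⟩ := (h ε hε).exists
    ⟨z, hzS, by rwa [dist_comm, dist_eq_norm]⟩

variable [NormedField 𝕜] [NormedSpace 𝕜 E] {M : Submodule 𝕜 E}

theorem zero : ApproxIn (M : Set E) 0 :=
  fun _ hε => Eventually.of_forall fun _ => ⟨0, M.zero_mem, by simpa using hε⟩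

theorem add (hu : ApproxIn (M : Set E) u) (hv : ApproxIn (M : Set E) v) :
    ApproxIn (M : Set E) (u + v) := by
  intro ε hε
  filter_upwards [hu (ε / 2) (half_pos hε), hv (ε / 2) (half_pos hε)]
    with n ⟨y, hyM, hy⟩ ⟨z, hzM, hz⟩
  refine ⟨y + z, M.add_mem hyM hzM, ?_⟩
  calc ‖y + z - (u + v) n‖ = ‖(y - u n) + (z - v n)‖ := by
        rw [Pi.add_apply, add_sub_add_comm]
    _ ≤ ‖y - u n‖ + ‖z - v n‖ := norm_add_le _ _
    _ < ε := by linarith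

theorem const_smul (hu : ApproxIn (M : Set E) u) (c : 𝕜) : ApproxIn (M : Set E) (c • u) := by
  intro ε hε
  have hc : 0 < ‖c‖ + 1 := by positivity
  filter_upwards [hu (ε / (‖c‖ + 1)) (div_pos hε hc)] with n ⟨z, hzM, hz⟩
  refine ⟨c • z, M.smul_mem c hzM, ?_⟩
  calc ‖c • z - (c • u) n‖ = ‖c‖ * ‖z - u n‖ := by rw [Pi.smul_apply, ← smul_sub, norm_smul]
    _ ≤ (‖c‖ + 1) * ‖z - u n‖ := by gcongr; linarith
    _ < (‖c‖ + 1) * (ε / (‖c‖ + 1)) := by gcongr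
    _ = ε := mul_div_cancel₀ ε hc.ne'

end ApproxIn

end Sequences

theorem abs_step_sub_le_of_abs_mul_self_sub_le {t δ : ℝ} (hδ : δ < 1 / 4)
    (ht : |t * t - t| ≤ δ) : t ≠ 1 / 2 ∧ |(if t < 1 / 2 then 0 else 1) - t| ≤ 2 * δ := by
  have h : |t| * |t - 1| ≤ δ := by rwa [← abs_mul, mul_sub_one]
  refine ⟨?_, ?_⟩
  · rintro rfl
    norm_num at ht
    linarith
  · split_ifs with hlt
    · have : 1 / 2 ≤ |t - 1| := by rw [abs_sub_comm]; exact le_abs.2 (Or.inl (by linarith))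
      rw [zero_sub, abs_neg]
      nlinarith [abs_nonneg t]
    · have : 1 / 2 ≤ |t| := le_abs.2 (Or.inl (by linarith))
      rw [abs_sub_comm]
      nlinarith [abs_nonneg (t - 1)]

section CStarAlgebra

variable {A : Type*} [CStarAlgebra A]

attribute [local instance] CStarAlgebra.spectralOrder CStarAlgebra.spectralOrderedRing

theorem exists_isStarProjection_norm_sub_le {a : A} (ha : IsSelfAdjoint a) {δ : ℝ}
    (hδ : δ < 1 / 4) (h : ‖a * a - a‖ ≤ δ) : ∃ r : A, IsStarProjection r ∧ ‖r - a‖ ≤ 2 * δ := by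
  have hspec : ∀ t ∈ spectrum ℝ a, |t * t - t| ≤ δ := fun t ht => by
    have hcfc : cfc (fun t : ℝ => t * t - t) a = a * a - a := by
      rw [cfc_sub (fun t : ℝ => t * t) (fun t : ℝ => t) a, cfc_mul (fun t : ℝ => t) (fun t => t) a,
        cfc_id' ℝ a]
    have hle := norm_apply_le_norm_cfc (fun t : ℝ => t * t - t) a ht
    rw [hcfc] at hle
    simpa [Real.norm_eq_abs] using hle.trans h
  set f : ℝ → ℝ := fun t => if t < 1 / 2 then 0 else 1
  have hf : ContinuousOn f (spectrum ℝ a) := fun t ht => by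
    refine ContinuousAt.continuousWithinAt ?_
    rcases ((abs_step_sub_le_of_abs_mul_self_sub_le hδ (hspec t ht)).1).lt_or_gt with hlt | hgt
    · exact continuousAt_const.congr <|
        (eventually_lt_nhds hlt).mono fun s hs => (if_pos hs).symm
    · exact continuousAt_const.congr <|
        (eventually_gt_nhds hgt).mono fun s hs => (if_neg (not_lt.2 hs.le)).symm
  refine ⟨cfc f a, ⟨?_, cfc_predicate f a⟩, ?_⟩
  · rw [IsIdempotentElem, ← cfc_mul f f a]
    exact cfc_congr fun t _ => by simp only [f]; split_ifs <;> simp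
  · have hsub : cfc f a - a = cfc (fun t => f t - t) a := by
      rw [cfc_sub f (fun t : ℝ => t) a, cfc_id' ℝ a]
    rw [hsub]
    exact norm_cfc_le (by linarith [(norm_nonneg _).trans h]) fun t ht => by
      simpa [f, Real.norm_eq_abs] using (abs_step_sub_le_of_abs_mul_self_sub_le hδ (hspec t ht)).2

theorem exists_star_mul_self_add_star_mul_self_eq_algebraMap (a : A) :
    ∃ c : A, star a * a + star c * c = algebraMap ℝ A (‖a‖ ^ 2) := by
  have hg : 0 ≤ algebraMap ℝ A (‖a‖ ^ 2) - star a * a :=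
    sub_nonneg.2 CStarAlgebra.star_mul_le_algebraMap_norm_sq
  have hc := CFC.sqrt_nonneg (algebraMap ℝ A (‖a‖ ^ 2) - star a * a)
  refine ⟨CFC.sqrt (algebraMap ℝ A (‖a‖ ^ 2) - star a * a), ?_⟩
  rw [hc.isSelfAdjoint.star_eq, CFC.sqrt_mul_sqrt_self _ hg, add_sub_cancel]

theorem norm_sq_le_add_norm_star_mul_self_add_sub (a c : A) {r : ℝ} (hr : 0 ≤ r) :
    ‖a‖ ^ 2 ≤ r + ‖star a * a + star c * c - algebraMap ℝ A r‖ := by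
  set e := star a * a + star c * c - algebraMap ℝ A r
  have he : IsSelfAdjoint e :=
    ((IsSelfAdjoint.star_mul_self a).add (.star_mul_self c)).sub (.algebraMap A (.all r))
  rw [sq, ← CStarRing.norm_star_mul_self, CStarAlgebra.norm_le_iff_le_algebraMap _ (by positivity)
    (star_mul_self_nonneg a)]
  calc star a * a ≤ star a * a + star c * c := le_add_of_nonneg_right (star_mul_self_nonneg c)
    _ = algebraMap ℝ A r + e := by simp only [e]; abel
    _ ≤ algebraMap ℝ A r + algebraMap ℝ A ‖e‖ := by gcongr; exact he.le_algebraMap_norm_self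
    _ = algebraMap ℝ A (r + ‖e‖) := (map_add _ _ _).symm

end CStarAlgebra

open ComplexStarModule in
theorem approxIn_isStarProjection {P : Type*} [CStarAlgebra P] {u : ℕ → P}
    (hu : ∃ C, ∀ n, ‖u n‖ ≤ C) (hstar : AsympEq (fun n => star (u n)) u)
    (hidem : AsympEq (u * u) u) : ApproxIn {p | IsStarProjection p} u := by
  obtain ⟨C, hC⟩ := hu
  set b : ℕ → P := fun n => (ℜ (u n) : P)
  have hbu : AsympEq b u := by
    have h := ((AsympEq.refl u).add hstar).const_smul (2⁻¹ : ℝ)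
    convert h using 1
    · ext n; simp [b, realPart_apply_coe]
    · ext n; simp [← two_smul ℝ (u n)]
  have hbb : AsympEq (b * b) b :=
    ((hbu.mul hbu ⟨C, fun n => (realPart.norm_le _).trans (hC n)⟩ ⟨C, hC⟩).trans hidem).trans
      hbu.symm
  intro ε hε
  set δ := min (ε / 8) (1 / 8)
  have hδ : 0 < δ := by positivity
  filter_upwards [hbb.eventually_norm_sub_lt hδ, hbu.eventually_norm_sub_lt (half_pos hε)]
    with n hbbn hbun
  obtain ⟨r, hr, hrb⟩ := exists_isStarProjection_norm_sub_le (ℜ (u n)).2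
    ((min_le_right _ _).trans_lt (by norm_num)) hbbn.le
  refine ⟨r, hr, ?_⟩
  calc ‖r - u n‖ ≤ ‖r - b n‖ + ‖b n - u n‖ := norm_sub_le_norm_sub_add_norm_sub _ _ _
    _ < ε := by linarith [min_le_left (ε / 8) (1 / 8)]

/-- A unital *-homomorphism `A → ℓ^∞(ℕ, P) / c₀(P)`, given by representative sequences. -/
structure IsAsymptoticStarAlgHom {A P : Type*} [CStarAlgebra A] [CStarAlgebra P]
    (β : A → ℕ → P) : Prop where
  bounded : ∀ x, ∃ C, ∀ n, ‖β x n‖ ≤ C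
  map_add : ∀ x y, AsympEq (β (x + y)) (β x + β y)
  map_smul : ∀ (c : ℂ) x, AsympEq (β (c • x)) (c • β x)
  map_mul : ∀ x y, AsympEq (β (x * y)) (β x * β y)
  map_star : ∀ x, AsympEq (β (star x)) (fun n => star (β x n))
  map_one : AsympEq (β 1) 1

namespace IsAsymptoticStarAlgHom

variable {A P : Type*} [CStarAlgebra A] [CStarAlgebra P] {β : A → ℕ → P}

theorem map_zero (hβ : IsAsymptoticStarAlgHom β) : AsympEq (β 0) 0 := by
  simpa using hβ.map_smul 0 0

theorem map_algebraMap (hβ : IsAsymptoticStarAlgHom β) (r : ℝ) :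
    AsympEq (β (algebraMap ℝ A r)) (fun _ => algebraMap ℝ P r) := by
  have h := (hβ.map_smul r 1).trans (hβ.map_one.const_smul (r : ℂ))
  simp only [Complex.coe_smul] at h
  convert h using 2 with n
  · rw [Algebra.algebraMap_eq_smul_one]
  · simp [Algebra.algebraMap_eq_smul_one]

theorem map_star_mul_self (hβ : IsAsymptoticStarAlgHom β) (x : A) :
    AsympEq (β (star x * x)) (fun n => star (β x n) * β x n) :=
  (hβ.map_mul _ _).trans <| (hβ.map_star x).mul (.refl _) (hβ.bounded _) (hβ.bounded x)

theorem eventually_norm_le (hβ : IsAsymptoticStarAlgHom β) (y : A) {ε : ℝ} (hε : 0 < ε) :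
    ∀ᶠ n in atTop, ‖β y n‖ ≤ ‖y‖ + ε := by
  obtain ⟨c, hc⟩ := exists_star_mul_self_add_star_mul_self_eq_algebraMap y
  have hsum : AsympEq (fun n => star (β y n) * β y n + star (β c n) * β c n)
      (fun _ => algebraMap ℝ P (‖y‖ ^ 2)) :=
    (((hβ.map_star_mul_self y).add (hβ.map_star_mul_self c)).symm.trans
      (hβ.map_add _ _).symm).trans (hc ▸ hβ.map_algebraMap _)
  filter_upwards [hsum.eventually_norm_sub_lt (by positivity : 0 < 2 * ‖y‖ * ε + ε ^ 2)]
    with n hn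
  have h := norm_sq_le_add_norm_star_mul_self_add_sub (β y n) (β c n) (sq_nonneg ‖y‖)
  nlinarith [norm_nonneg (β y n), norm_nonneg y]

theorem eventually_norm_sub_lt (hβ : IsAsymptoticStarAlgHom β) (x y : A) {ε : ℝ} (hε : 0 < ε) :
    ∀ᶠ n in atTop, ‖β x n - β y n‖ < ‖x - y‖ + ε := by
  have h : AsympEq (β x - β y) (β (x - y)) := by
    have h' := (hβ.map_add (x - y) y).add (AsympEq.refl (-β y))
    rwa [sub_add_cancel, add_neg_cancel_right, ← sub_eq_add_neg] at h'
  filter_upwards [h.eventually_norm_sub_lt (half_pos hε), hβ.eventually_norm_le (x - y)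
    (half_pos hε)] with n h₁ h₂
  calc ‖β x n - β y n‖ ≤ ‖β x n - β y n - β (x - y) n‖ + ‖β (x - y) n‖ := norm_le_norm_sub_add _ _
    _ < ‖x - y‖ + ε := by simp only [Pi.sub_apply] at h₁; linarith

theorem approxIn_of_isStarProjection (hβ : IsAsymptoticStarAlgHom β) {p : A}
    (hp : IsStarProjection p) :
    ApproxIn {r | IsStarProjection r} (β p) := by
  refine approxIn_isStarProjection (hβ.bounded p) ?_ ?_
  · simpa [hp.isSelfAdjoint.star_eq] using (hβ.map_star p).symm
  · simpa [hp.isIdempotentElem.eq] using (hβ.map_mul p p).symm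

theorem approxIn_span (hβ : IsAsymptoticStarAlgHom β) {x : A}
    (hx : x ∈ Submodule.span ℂ {p | IsStarProjection p}) :
    ApproxIn (Submodule.span ℂ {r : P | IsStarProjection r} : Set P) (β x) := by
  induction hx using Submodule.span_induction with
  | mem p hp => exact (hβ.approxIn_of_isStarProjection hp).mono Submodule.subset_span
  | zero => exact ApproxIn.zero.congr hβ.map_zero.symm
  | add x y _ _ hx hy => exact (hx.add hy).congr (hβ.map_add x y).symm
  | smul c x _ hx => exact (hx.const_smul c).congr (hβ.map_smul c x).symm

theorem lpProperty (hβ : IsAsymptoticStarAlgHom β) {ι : P → A}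
    (hfix : ∀ p, AsympEq (β (ι p)) fun _ => p) (hA : LPProperty A) : LPProperty P := by
  rw [lpProperty_iff_dense_span_isStarProjection] at hA ⊢
  refine fun q => ApproxIn.mem_closure_of_const <| (ApproxIn.of_forall_eventually_lt
    fun ε hε => ?_).congr (hfix q)
  obtain ⟨x, hx, hxq⟩ := Metric.mem_closure_iff.1 (hA (ι q)) (ε / 2) (half_pos hε)
  refine ⟨β x, hβ.approxIn_span hx, ?_⟩
  filter_upwards [hβ.eventually_norm_sub_lt x (ι q) (half_pos hε)] with n hn
  rw [dist_comm, dist_eq_norm] at hxq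
  linarith

end IsAsymptoticStarAlgHom

theorem linear_span_stmt14_general {P A : Type*} [CStarAlgebra P] [CStarAlgebra A]
    (ι : P →⋆ₐ[ℂ] A)
    (β : A → ℕ → P)
    (hbd : ∀ x, ∃ C : ℝ, ∀ n, ‖β x n‖ ≤ C)
    (hadd : ∀ x y, Tendsto (fun n => ‖β (x + y) n - (β x n + β y n)‖) atTop (𝓝 0))
    (hmul : ∀ x y, Tendsto (fun n => ‖β (x * y) n - β x n * β y n‖) atTop (𝓝 0))
    (hsmul : ∀ (c : ℂ) (x), Tendsto (fun n => ‖β (c • x) n - c • β x n‖) atTop (𝓝 0))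
    (hstar : ∀ x, Tendsto (fun n => ‖β (star x) n - star (β x n)‖) atTop (𝓝 0))
    (hone : Tendsto (fun n => ‖β 1 n - 1‖) atTop (𝓝 0))
    (hfix : ∀ p : P, Tendsto (fun n => ‖β (ι p) n - p‖) atTop (𝓝 0))
    (hA : LPProperty A) : LPProperty P := by
  have hβ : IsAsymptoticStarAlgHom β :=
    { bounded := hbd
      map_add := fun x y => asympEq_iff_tendsto_norm.2 (hadd x y)
      map_smul := fun c x => asympEq_iff_tendsto_norm.2 (hsmul c x)
      map_mul := fun x y => asympEq_iff_tendsto_norm.2 (hmul x y)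
      map_star := fun x => asympEq_iff_tendsto_norm.2 (hstar x)
      map_one := asympEq_iff_tendsto_norm.2 hone }
  exact hβ.lpProperty (fun p => asympEq_iff_tendsto_norm.2 (hfix p)) hA

/-- Let `P ⊆ A` (via a unital injective *-homomorphism `ι`) and
suppose there is a unital injective *-homomorphism `β : A → P^∞ = ℓ^∞(ℕ,P)/c₀(P)`
restricting to the canonical (constant-sequence) embedding on `P`.  Here `β` is
encoded by bounded sequence representatives: all *-homomorphism identities hold
modulo `c₀(P)`, i.e. up to sequences tending to `0` in norm.  If `A` has the LP
property, then so does `P`. -/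
theorem linear_span_stmt14 {P A : Type*} [CStarAlgebra P] [CStarAlgebra A]
    (ι : P →⋆ₐ[ℂ] A) (hι : Function.Injective ι)
    (β : A → ℕ → P)
    (hbd : ∀ x, ∃ C : ℝ, ∀ n, ‖β x n‖ ≤ C)
    (hadd : ∀ x y, Tendsto (fun n => ‖β (x + y) n - (β x n + β y n)‖) atTop (𝓝 0))
    (hmul : ∀ x y, Tendsto (fun n => ‖β (x * y) n - β x n * β y n‖) atTop (𝓝 0))
    (hsmul : ∀ (c : ℂ) (x), Tendsto (fun n => ‖β (c • x) n - c • β x n‖) atTop (𝓝 0))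
    (hstar : ∀ x, Tendsto (fun n => ‖β (star x) n - star (β x n)‖) atTop (𝓝 0))
    (hone : Tendsto (fun n => ‖β 1 n - 1‖) atTop (𝓝 0))
    (hfix : ∀ p : P, Tendsto (fun n => ‖β (ι p) n - p‖) atTop (𝓝 0))
    (hinj : ∀ x y : A, Tendsto (fun n => ‖β x n - β y n‖) atTop (𝓝 0) → x = y)
    (hA : LPProperty A) : LPProperty P :=
  linear_span_stmt14_general ι β hbd hadd hmul hsmul hstar hone hfix hA
end
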